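/- arXiv:math/0102023 — 4 statements merged into one kernel-verified Lean document; each statement's English description precedes it below -/
import Mathlib

section
/- If f : ℝ² → ℝ² preserves all unit distances (d(x,y) = 1 implies d(f(x),f(y)) = 1), then f is an isometry. -/
/-!
In the plane, two points each equidistant from the ends of a segment lie on its perpendicular
bisector, so their distance is the sum or the difference of their distances to its midpoint;
this rigidity, applied to the images of suitable configurations, drives the whole argument.

If `f` preserves the distance `a > 0`, the apexes of a rhombus of side `a` and short diagonal `a`
go to equal points or to points at distance `√3 a`, and a third point rules out the collapse, so
`f` preserves `√3 a`. Gluing two such rhombi shows that `f` maps the midpoint of a segment of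
length `2 a` to the midpoint of the image, so `f` preserves `2 a`, and propagating midpoints
along an arithmetic progression gives all `n a`. Apollonius' theorem turns `a`, `b`, `2 b` into
`√(a² - b²)`; thus `2 m` and `√(4 m² + 1) = √((2 m² + 1)² - (2 m²)²)` are preserved.
With `k = 4 m²`, points at distances `√(k + 1)` and `√k` from both ends of a unit segment
are `δ = √(k + 3/4) - √(k - 1/4)` or more than `2` apart, and the latter is impossible for
images of points at distance `δ ≤ 2`. So arbitrarily small `δ`, and all `n δ`, are preserved,
and a point at distances `n δ` and `δ` from `x` and `y` pins `d(f x, f y)` to within `2 δ`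
of `d(x, y)`.
-/

open Module EuclideanGeometry
open scoped RealInnerProductSpace

section InnerProductSpace

variable {V : Type*} [NormedAddCommGroup V] [InnerProductSpace ℝ V]

theorem dist_midpoint_sq_of_dist_eq {a b x : V} {r : ℝ} (ha : dist x a = r) (hb : dist x b = r) :
    dist x (midpoint ℝ a b) ^ 2 = r ^ 2 - (dist a b / 2) ^ 2 := by
  have := dist_sq_add_dist_sq_eq_two_mul_dist_midpoint_sq_add_half_dist_sq x a b
  rw [ha, hb] at this
  linarith

end InnerProductSpace

theorem dist_vec₂_eq {s t s' t' d : ℝ} (hd : 0 ≤ d)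
    (h : (s - s') ^ 2 + (t - t') ^ 2 = d ^ 2) :
    dist !₂[s, t] !₂[s', t'] = d := by
  rw [EuclideanSpace.dist_eq, Fin.sum_univ_two]
  simp [Real.dist_eq, sq_abs, h, hd]

section Plane

variable {V : Type*} [NormedAddCommGroup V] [InnerProductSpace ℝ V] [Fact (finrank ℝ V = 2)]

theorem abs_inner_eq_norm_mul_norm_of_inner_eq_zero {u v w : V} (hw : w ≠ 0)
    (hu : ⟪w, u⟫ = 0) (hv : ⟪w, v⟫ = 0) : |⟪u, v⟫| = ‖u‖ * ‖v‖ := by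
  have := FiniteDimensional.of_fact_finrank_eq_two (K := ℝ) (V := V)
  let o : Orientation ℝ V (Fin 2) := (finBasisOfFinrankEq ℝ V Fact.out).orientation
  have key := congrArg abs (o.inner_mul_inner_add_areaForm_mul_areaForm w u v)
  have hw2 : 0 < ‖w‖ ^ 2 := by positivity
  rw [hu, hv, zero_mul, zero_add, abs_mul, abs_mul, o.abs_areaForm_of_orthogonal hu,
    o.abs_areaForm_of_orthogonal hv, abs_of_pos hw2] at key
  apply mul_left_cancel₀ hw2.ne'
  rw [← key]
  ring

theorem dist_eq_add_or_eq_abs_sub_of_dist_eq_dist {a b x y : V} (hab : a ≠ b)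
    (hx : dist x a = dist x b) (hy : dist y a = dist y b) :
    dist x y = dist x (midpoint ℝ a b) + dist y (midpoint ℝ a b) ∨
      dist x y = |dist x (midpoint ℝ a b) - dist y (midpoint ℝ a b)| := by
  set m := midpoint ℝ a b
  have hm : dist a m = dist b m := dist_left_midpoint_eq_dist_right_midpoint a b
  have hxm : ⟪b - a, x - m⟫ = 0 := by
    rw [real_inner_comm]
    exact inner_vsub_vsub_of_dist_eq_of_dist_eq hm (by rwa [dist_comm a, dist_comm b])
  have hym : ⟪b - a, y - m⟫ = 0 := by
    rw [real_inner_comm]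
    exact inner_vsub_vsub_of_dist_eq_of_dist_eq hm (by rwa [dist_comm a, dist_comm b])
  have hinner := abs_inner_eq_norm_mul_norm_of_inner_eq_zero (sub_ne_zero.2 hab.symm) hxm hym
  have hsq := norm_sub_sq_real (x - m) (y - m)
  rw [sub_sub_sub_cancel_right] at hsq
  rw [dist_eq_norm x y, dist_eq_norm x m, dist_eq_norm y m]
  rcases (abs_eq (by positivity)).1 hinner with h | h
  · right
    refine (pow_left_inj₀ (norm_nonneg _) (abs_nonneg _) two_ne_zero).1 ?_
    rw [hsq, h, sq_abs]
    ring
  · left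
    refine (pow_left_inj₀ (norm_nonneg _) (by positivity) two_ne_zero).1 ?_
    rw [hsq, h]
    ring

theorem midpoint_eq_midpoint_of_dist_eq {a b x y : V} {r : ℝ} (hab : a ≠ b) (hxy : x ≠ y)
    (hxa : dist x a = r) (hxb : dist x b = r) (hya : dist y a = r) (hyb : dist y b = r) :
    midpoint ℝ x y = midpoint ℝ a b := by
  set m := midpoint ℝ a b
  have hm : dist x m = dist y m := (pow_left_inj₀ dist_nonneg dist_nonneg two_ne_zero).1 <| by
    rw [dist_midpoint_sq_of_dist_eq hxa hxb, dist_midpoint_sq_of_dist_eq hya hyb]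
  rcases dist_eq_add_or_eq_abs_sub_of_dist_eq_dist hab (hxa.trans hxb.symm)
    (hya.trans hyb.symm) with h | h
  · refine (eq_midpoint_of_dist_eq_half ?_ ?_).symm
    · linarith
    · rw [dist_comm]; linarith
  · rw [hm, sub_self, abs_zero, dist_eq_zero] at h
    exact absurd h hxy

theorem exists_isometry_euclideanSpace {x y : V} (hxy : x ≠ y) :
    ∃ φ : EuclideanSpace ℝ (Fin 2) → V,
      Isometry φ ∧ φ !₂[0, 0] = x ∧ φ !₂[dist x y, 0] = y := by
  have := FiniteDimensional.of_fact_finrank_eq_two (K := ℝ) (V := V)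
  let J := (finBasisOfFinrankEq ℝ V Fact.out).orientation.rightAngleRotation
  have hr : 0 < dist x y := dist_pos.2 hxy
  set e := (dist x y)⁻¹ • (y - x)
  have he : ‖e‖ = 1 := by
    rw [norm_smul, ← dist_eq_norm', norm_inv, Real.norm_of_nonneg hr.le, inv_mul_cancel₀ hr.ne']
  have hy : x + dist x y • e = y := by simp [e, smul_smul, mul_inv_cancel₀ hr.ne']
  clear_value e
  have hJe : ⟪e, J e⟫ = 0 := by
    rw [Orientation.inner_rightAngleRotation_right, Orientation.areaForm_apply_self, neg_zero]
  refine ⟨fun p => x + p 0 • e + p 1 • J e, Isometry.of_dist_eq fun p q => ?_,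
    by simp, by simpa using hy⟩
  rw [dist_eq_norm, EuclideanSpace.dist_eq, Fin.sum_univ_two, ← Real.sqrt_sq (norm_nonneg _)]
  congr 1
  rw [show x + p 0 • e + p 1 • J e - (x + q 0 • e + q 1 • J e)
    = (p 0 - q 0) • e + (p 1 - q 1) • J e by module, norm_add_sq_real,
    real_inner_smul_left, real_inner_smul_right, hJe, norm_smul, norm_smul,
    LinearIsometryEquiv.norm_map, he]
  simp [Real.dist_eq, sq_abs]

theorem exists_dist_eq_dist_eq {x y : V} {d₁ d₂ : ℝ} (hxy : x ≠ y)
    (h₁ : |d₁ - d₂| ≤ dist x y) (h₂ : dist x y ≤ d₁ + d₂) :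
    ∃ z, dist x z = d₁ ∧ dist y z = d₂ := by
  obtain ⟨φ, hφ, hx, hy⟩ := exists_isometry_euclideanSpace hxy
  set r := dist x y
  have hr : 0 < r := dist_pos.2 hxy
  obtain ⟨hlo, hhi⟩ := abs_le.1 h₁
  set ξ := (d₁ ^ 2 - d₂ ^ 2 + r ^ 2) / (2 * r)
  have hξ : 2 * r * ξ = d₁ ^ 2 - d₂ ^ 2 + r ^ 2 := mul_div_cancel₀ _ (by positivity)
  -- `(2 r d₁)² - (2 r ξ)²` factors as the product of the four triangle-inequality defects
  have hξd : ξ ^ 2 ≤ d₁ ^ 2 := by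
    have : (2 * r * ξ) ^ 2 ≤ (2 * r * d₁) ^ 2 := by
      rw [hξ]
      nlinarith [mul_nonneg
        (mul_nonneg (by linarith : 0 ≤ d₂ - d₁ + r) (by linarith : 0 ≤ d₂ + d₁ - r))
        (mul_nonneg (by linarith : 0 ≤ d₁ + r - d₂) (by linarith : 0 ≤ d₁ + r + d₂))]
    rw [mul_pow (2 * r), mul_pow (2 * r)] at this
    exact le_of_mul_le_mul_left this (by positivity)
  have hη := Real.sq_sqrt (sub_nonneg.2 hξd)
  refine ⟨φ !₂[ξ, √(d₁ ^ 2 - ξ ^ 2)], ?_, ?_⟩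
  · rw [← hx, hφ.dist_eq]
    exact dist_vec₂_eq (by linarith) (by linear_combination hη)
  · rw [← hy, hφ.dist_eq]
    exact dist_vec₂_eq (by linarith) (by linear_combination hη - hξ)

end Plane

def PreservesDist {α β : Type*} [PseudoMetricSpace α] [PseudoMetricSpace β] (f : α → β)
    (d : ℝ) : Prop :=
  ∀ x y, dist x y = d → dist (f x) (f y) = d

section StrictConvex

variable {V W : Type*} [NormedAddCommGroup V] [NormedSpace ℝ V]
  [NormedAddCommGroup W] [NormedSpace ℝ W] [StrictConvexSpace ℝ W]

theorem dist_eq_nat_mul_of_dist_add_one_of_dist_add_two {p : ℕ → W} {a : ℝ}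
    (h₁ : ∀ j, dist (p j) (p (j + 1)) = a) (h₂ : ∀ j, dist (p j) (p (j + 2)) = 2 * a)
    (n : ℕ) :
    dist (p 0) (p n) = n * a := by
  have hstep : ∀ j, p (j + 1) - p j = p 1 - p 0 := by
    intro j
    induction j with
    | zero => rfl
    | succ j ih =>
      have hmid : p (j + 1) = midpoint ℝ (p j) (p (j + 2)) :=
        eq_midpoint_of_dist_eq_half (by rw [h₁, h₂]; ring) (by rw [h₁, h₂]; ring)
      rw [← ih]
      show p (j + 2) - p (j + 1) = p (j + 1) - p j
      rw [hmid, midpoint_eq_smul_add, invOf_eq_inv]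
      module
  have hp : ∀ n : ℕ, p n = p 0 + (n : ℝ) • (p 1 - p 0) := by
    intro n
    induction n with
    | zero => simp
    | succ n ih => rw [← sub_add_cancel (p (n + 1)) (p n), hstep, ih]; push_cast; module
  rw [hp n, dist_self_add_right, norm_smul, ← dist_eq_norm, dist_comm, h₁, Real.norm_natCast]

theorem PreservesDist.natCast_mul {f : V → W} {a : ℝ} (h₁ : PreservesDist f a)
    (h₂ : PreservesDist f (2 * a)) (n : ℕ) : PreservesDist f (n * a) := by
  intro x y hxy
  rcases Nat.eq_zero_or_pos n with rfl | hn
  · rw [Nat.cast_zero, zero_mul, dist_eq_zero] at hxy ⊢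
    rw [hxy]
  have hn' : (0 : ℝ) < n := Nat.cast_pos.2 hn
  set p : ℕ → V := fun j => AffineMap.lineMap x y ((j : ℝ) / n)
  have hp : ∀ j k : ℕ, dist (p j) (p (j + k)) = k * a := by
    intro j k
    rw [dist_lineMap_lineMap, hxy, Real.dist_eq]
    push_cast
    rw [show (j : ℝ) / n - (j + k) / n = -(k / n) by ring, abs_neg,
      abs_of_nonneg (by positivity)]
    field_simp
  have := dist_eq_nat_mul_of_dist_add_one_of_dist_add_two (p := f ∘ p)
    (fun j => h₁ _ _ (by simpa using hp j 1)) (fun j => h₂ _ _ (by simpa using hp j 2)) n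
  simpa [p, hn'.ne'] using this

end StrictConvex

section PlaneDomain

variable {V : Type*} [NormedAddCommGroup V] [InnerProductSpace ℝ V] [Fact (finrank ℝ V = 2)]

theorem PreservesDist.dist_le_two_mul {W : Type*} [PseudoMetricSpace W] {f : V → W} {a : ℝ}
    (hf : PreservesDist f a) (ha : 0 ≤ a) {x y : V} (h : dist x y ≤ 2 * a) :
    dist (f x) (f y) ≤ 2 * a := by
  rcases eq_or_ne x y with rfl | hxy
  · rw [dist_self]; linarith
  obtain ⟨z, hxz, hyz⟩ :=
    exists_dist_eq_dist_eq hxy (d₁ := a) (d₂ := a) (by simp) (by linarith)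
  calc dist (f x) (f y) ≤ dist (f x) (f z) + dist (f z) (f y) := dist_triangle _ _ _
    _ = 2 * a := by rw [hf _ _ hxz, dist_comm, hf _ _ hyz]; ring

theorem PreservesDist.abs_dist_sub_dist_le {W : Type*} [PseudoMetricSpace W] {f : V → W}
    {δ : ℝ} (hf : ∀ n : ℕ, PreservesDist f (n * δ)) (hδ : 0 < δ) (x y : V) :
    |dist (f x) (f y) - dist x y| ≤ 2 * δ := by
  rcases eq_or_ne x y with rfl | hxy
  · simp only [dist_self, sub_zero, abs_zero]; positivity
  have hr : 0 < dist x y := dist_pos.2 hxy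
  set n := ⌈dist x y / δ⌉₊
  have hn : (1 : ℝ) ≤ n := Nat.one_le_cast.2 (Nat.ceil_pos.2 (by positivity))
  have hle : dist x y ≤ n * δ := (div_le_iff₀ hδ).1 (Nat.le_ceil _)
  have hlt : n * δ < dist x y + δ :=
    calc n * δ < (dist x y / δ + 1) * δ :=
          mul_lt_mul_of_pos_right (Nat.ceil_lt_add_one (by positivity)) hδ
      _ = dist x y + δ := by field_simp
  obtain ⟨z, hxz, hyz⟩ := exists_dist_eq_dist_eq hxy (d₁ := n * δ) (d₂ := δ)
    (abs_le.2 ⟨by nlinarith, by linarith⟩) (by linarith)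
  have hfxz := hf n _ _ hxz
  have hfyz := (by simpa using hf 1 : PreservesDist f δ) _ _ hyz
  rw [abs_le]
  constructor <;> linarith [dist_triangle (f x) (f z) (f y), dist_triangle (f x) (f y) (f z),
    dist_comm (f z) (f y)]

theorem PreservesDist.sqrt_sq_sub_sq {W : Type*} [NormedAddCommGroup W]
    [InnerProductSpace ℝ W] {f : V → W} {a b : ℝ} (ha : PreservesDist f a)
    (hb : PreservesDist f b)
    (h2b : PreservesDist f (2 * b)) (hb0 : 0 < b) (hba : b < a) :
    PreservesDist f √(a ^ 2 - b ^ 2) := by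
  intro x y hxy
  set r := √(a ^ 2 - b ^ 2)
  have hr2 : r ^ 2 = a ^ 2 - b ^ 2 := Real.sq_sqrt (by nlinarith)
  have hr : 0 < r := Real.sqrt_pos.2 (by nlinarith)
  obtain ⟨φ, hφ, hx, hy⟩ := exists_isometry_euclideanSpace (dist_pos.1 (hxy ▸ hr))
  rw [hxy] at hy
  set u := φ !₂[r, b]
  set v := φ !₂[r, -b]
  have hfuv := h2b u v (by rw [hφ.dist_eq]; exact dist_vec₂_eq (by positivity) (by ring))
  have hfxu := ha x u (by
    rw [← hx, hφ.dist_eq]; exact dist_vec₂_eq (by linarith) (by linear_combination hr2))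
  have hfxv := ha x v (by
    rw [← hx, hφ.dist_eq]; exact dist_vec₂_eq (by linarith) (by linear_combination hr2))
  have hfyu := hb y u (by rw [← hy, hφ.dist_eq]; exact dist_vec₂_eq hb0.le (by ring))
  have hfyv := hb y v (by rw [← hy, hφ.dist_eq]; exact dist_vec₂_eq hb0.le (by ring))
  have hmid : f y = midpoint ℝ (f u) (f v) :=
    eq_midpoint_of_dist_eq_half (by rw [dist_comm, hfyu, hfuv]; ring) (by rw [hfyv, hfuv]; ring)
  have := dist_midpoint_sq_of_dist_eq hfxu hfxv
  rw [← hmid, hfuv] at this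
  rw [← Real.sqrt_sq dist_nonneg, this, mul_div_cancel_left₀ b two_ne_zero]

end PlaneDomain

section PlaneToPlane

variable {V W : Type*} [NormedAddCommGroup V] [InnerProductSpace ℝ V] [Fact (finrank ℝ V = 2)]
  [NormedAddCommGroup W] [InnerProductSpace ℝ W] [Fact (finrank ℝ W = 2)] {f : V → W}

theorem PreservesDist.eq_or_dist_eq_sqrt_three_mul {a : ℝ} (hf : PreservesDist f a)
    (ha : 0 < a) {x y : V} (hxy : dist x y = √3 * a) :
    f x = f y ∨ dist (f x) (f y) = √3 * a := by
  have h3 : √3 ^ 2 = 3 := Real.sq_sqrt (by norm_num)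
  obtain ⟨φ, hφ, hx, hy⟩ :=
    exists_isometry_euclideanSpace (dist_pos.1 (by rw [hxy]; positivity))
  rw [hxy] at hy
  set z := φ !₂[√3 * a / 2, a / 2]
  set w := φ !₂[√3 * a / 2, -(a / 2)]
  have hfzw := hf z w (by rw [hφ.dist_eq]; exact dist_vec₂_eq ha.le (by ring))
  have hfxz := hf x z (by
    rw [← hx, hφ.dist_eq]; exact dist_vec₂_eq ha.le (by linear_combination a ^ 2 / 4 * h3))
  have hfxw := hf x w (by
    rw [← hx, hφ.dist_eq]; exact dist_vec₂_eq ha.le (by linear_combination a ^ 2 / 4 * h3))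
  have hfyz := hf y z (by
    rw [← hy, hφ.dist_eq]; exact dist_vec₂_eq ha.le (by linear_combination a ^ 2 / 4 * h3))
  have hfyw := hf y w (by
    rw [← hy, hφ.dist_eq]; exact dist_vec₂_eq ha.le (by linear_combination a ^ 2 / 4 * h3))
  refine or_iff_not_imp_left.2 fun hne => ?_
  have hmid := midpoint_eq_midpoint_of_dist_eq (dist_pos.1 (hfzw ▸ ha)) hne hfxz hfxw hfyz hfyw
  have hsq := dist_midpoint_sq_of_dist_eq hfxz hfxw
  rw [← hmid, dist_left_midpoint, Real.norm_two, hfzw] at hsq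
  refine (pow_left_inj₀ dist_nonneg (by positivity) two_ne_zero).1 ?_
  linear_combination 4 * hsq - a ^ 2 * h3

theorem PreservesDist.sqrt_three_mul {a : ℝ} (hf : PreservesDist f a) (ha : 0 < a) :
    PreservesDist f (√3 * a) := by
  have h1 : 1 < √3 := by rw [Real.lt_sqrt zero_le_one]; norm_num
  intro x y hxy
  obtain ⟨z, hxz, hyz⟩ := exists_dist_eq_dist_eq (dist_pos.1 (by rw [hxy]; positivity))
    (d₁ := a) (d₂ := √3 * a) (abs_le.2 ⟨by nlinarith, by nlinarith⟩) (by linarith)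
  refine (hf.eq_or_dist_eq_sqrt_three_mul ha hxy).resolve_left fun hfxy => ?_
  have hfyz : dist (f y) (f z) = a := by rw [← hfxy]; exact hf _ _ hxz
  rcases hf.eq_or_dist_eq_sqrt_three_mul ha hyz with h | h
  · rw [h, dist_self] at hfyz; linarith
  · rw [hfyz] at h; nlinarith

theorem PreservesDist.two_mul {a : ℝ} (hf : PreservesDist f a) (ha : 0 < a) :
    PreservesDist f (2 * a) := by
  have h3 : √3 ^ 2 = 3 := Real.sq_sqrt (by norm_num)
  have hf3 := hf.sqrt_three_mul ha
  have hne : ∀ {u v : V}, dist u v = a → f u ≠ f v := fun h => dist_pos.1 (hf _ _ h ▸ ha)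
  have hne3 : ∀ {u v : V}, dist u v = √3 * a → f u ≠ f v :=
    fun h => dist_pos.1 (hf3 _ _ h ▸ by positivity)
  intro x y hxy
  obtain ⟨φ, hφ, hx, hy⟩ :=
    exists_isometry_euclideanSpace (dist_pos.1 (by rw [hxy]; positivity))
  rw [hxy] at hy
  -- `x, p, m, q, y` are vertices of three equilateral triangles `xpm`, `pmq`, `mqy` of side `a`
  set p := φ !₂[a / 2, √3 * a / 2]
  set m := φ !₂[a, 0]
  set q := φ !₂[3 * a / 2, √3 * a / 2]
  have hxp : dist x p = a := by
    rw [← hx, hφ.dist_eq]; exact dist_vec₂_eq ha.le (by linear_combination a ^ 2 / 4 * h3)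
  have hxm : dist x m = a := by rw [← hx, hφ.dist_eq]; exact dist_vec₂_eq ha.le (by ring)
  have hpm : dist p m = a := by
    rw [hφ.dist_eq]; exact dist_vec₂_eq ha.le (by linear_combination a ^ 2 / 4 * h3)
  have hpq : dist p q = a := by rw [hφ.dist_eq]; exact dist_vec₂_eq ha.le (by ring)
  have hmq : dist m q = a := by
    rw [hφ.dist_eq]; exact dist_vec₂_eq ha.le (by linear_combination a ^ 2 / 4 * h3)
  have hyq : dist y q = a := by
    rw [← hy, hφ.dist_eq]; exact dist_vec₂_eq ha.le (by linear_combination a ^ 2 / 4 * h3)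
  have hym : dist y m = a := by rw [← hy, hφ.dist_eq]; exact dist_vec₂_eq ha.le (by ring)
  have hxq : dist x q = √3 * a := by
    rw [← hx, hφ.dist_eq]
    exact dist_vec₂_eq (by positivity) (by linear_combination -(3 * a ^ 2 / 4) * h3)
  have hpy : dist p y = √3 * a := by
    rw [← hy, hφ.dist_eq]
    exact dist_vec₂_eq (by positivity) (by linear_combination -(3 * a ^ 2 / 4) * h3)
  have h₁ := midpoint_eq_midpoint_of_dist_eq (hne hpm) (hne3 hxq) (hf _ _ hxp)
    (hf _ _ hxm) (by rw [dist_comm]; exact hf _ _ hpq) (by rw [dist_comm]; exact hf _ _ hmq)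
  have h₂ := midpoint_eq_midpoint_of_dist_eq (hne hmq) (hne3 hpy) (hf _ _ hpm)
    (hf _ _ hpq) (hf _ _ hym) (hf _ _ hyq)
  rw [midpoint_eq_midpoint_iff_vsub_eq_vsub] at h₁ h₂
  have hfm : f x - f y = (2 : ℝ) • (f x - f m) := by
    simp only [vsub_eq_sub] at h₁ h₂
    linear_combination (norm := module) -(h₁ + h₂)
  rw [dist_eq_norm, hfm, norm_smul, Real.norm_two, ← dist_eq_norm, hf _ _ hxm]

theorem PreservesDist.sqrt_add_sub_sqrt_sub {k : ℝ} (h₁ : PreservesDist f 1)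
    (hk : PreservesDist f √k) (hk₁ : PreservesDist f √(k + 1)) (hk₂ : 2 ≤ k) :
    PreservesDist f (√(k + 3 / 4) - √(k - 1 / 4)) := by
  set A := √(k + 3 / 4)
  set B := √(k - 1 / 4)
  have hA : A ^ 2 = k + 3 / 4 := Real.sq_sqrt (by linarith)
  have hB : B ^ 2 = k - 1 / 4 := Real.sq_sqrt (by linarith)
  have hK : √k ^ 2 = k := Real.sq_sqrt (by linarith)
  have hK₁ : √(k + 1) ^ 2 = k + 1 := Real.sq_sqrt (by linarith)
  have hA0 : 3 / 2 ≤ A := by nlinarith [Real.sqrt_nonneg (k + 3 / 4)]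
  have hB0 : 1 ≤ B := by nlinarith [Real.sqrt_nonneg (k - 1 / 4)]
  have hAB : (A - B) * (A + B) = 1 := by linear_combination hA - hB
  have hδ : 0 < A - B := by nlinarith
  intro x y hxy
  have hle := h₁.dist_le_two_mul zero_le_one (x := x) (y := y) (by nlinarith)
  obtain ⟨φ, hφ, hx, hy⟩ := exists_isometry_euclideanSpace (dist_pos.1 (hxy ▸ hδ))
  rw [hxy] at hy
  set u := φ !₂[A, 1 / 2]
  set v := φ !₂[A, -(1 / 2)]
  have hfuv := h₁ u v (by rw [hφ.dist_eq]; exact dist_vec₂_eq zero_le_one (by ring))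
  have hfxu := hk₁ x u (by
    rw [← hx, hφ.dist_eq]
    exact dist_vec₂_eq (Real.sqrt_nonneg _) (by linear_combination hA - hK₁))
  have hfxv := hk₁ x v (by
    rw [← hx, hφ.dist_eq]
    exact dist_vec₂_eq (Real.sqrt_nonneg _) (by linear_combination hA - hK₁))
  have hfyu := hk y u (by
    rw [← hy, hφ.dist_eq]
    exact dist_vec₂_eq (Real.sqrt_nonneg _) (by linear_combination hB - hK))
  have hfyv := hk y v (by
    rw [← hy, hφ.dist_eq]
    exact dist_vec₂_eq (Real.sqrt_nonneg _) (by linear_combination hB - hK))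
  have hxm : dist (f x) (midpoint ℝ (f u) (f v)) = A :=
    (pow_left_inj₀ dist_nonneg (by positivity) two_ne_zero).1 <| by
      rw [dist_midpoint_sq_of_dist_eq hfxu hfxv, hfuv, hK₁, hA]; ring
  have hym : dist (f y) (midpoint ℝ (f u) (f v)) = B :=
    (pow_left_inj₀ dist_nonneg (by positivity) two_ne_zero).1 <| by
      rw [dist_midpoint_sq_of_dist_eq hfyu hfyv, hfuv, hK, hB]; ring
  rcases dist_eq_add_or_eq_abs_sub_of_dist_eq_dist (dist_pos.1 (hfuv ▸ one_pos))
    (hfxu.trans hfxv.symm) (hfyu.trans hfyv.symm) with h | h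
  · rw [h, hxm, hym] at hle; linarith
  · rw [h, hxm, hym, abs_of_pos hδ]

theorem PreservesDist.exists_lt_forall_natCast_mul (h₁ : PreservesDist f 1) {ε : ℝ}
    (hε : 0 < ε) : ∃ δ, 0 < δ ∧ δ < ε ∧ ∀ n : ℕ, PreservesDist f (n * δ) := by
  have hnat : ∀ n : ℕ, PreservesDist f n := fun n => by
    simpa using h₁.natCast_mul (by simpa using h₁.two_mul one_pos) n
  obtain ⟨m, hm⟩ := exists_nat_gt ε⁻¹
  have hm₁ : (1 : ℝ) ≤ m := by
    have : (0 : ℝ) < m := lt_trans (inv_pos.2 hε) hm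
    exact Nat.one_le_cast.2 (Nat.cast_pos.1 this)
  have hk : PreservesDist f √(4 * m ^ 2) := by
    rw [show (4 : ℝ) * m ^ 2 = (2 * m) ^ 2 by ring, Real.sqrt_sq (by positivity)]
    exact_mod_cast hnat (2 * m)
  have hk₁ : PreservesDist f √(4 * m ^ 2 + 1) := by
    have := (hnat (2 * m ^ 2 + 1)).sqrt_sq_sub_sq (hnat (2 * m ^ 2))
      (by exact_mod_cast hnat (2 * (2 * m ^ 2))) (by push_cast; positivity)
      (by push_cast; linarith)
    push_cast at this
    rwa [show ((2 : ℝ) * m ^ 2 + 1) ^ 2 - (2 * m ^ 2) ^ 2 = 4 * m ^ 2 + 1 by ring] at this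
  have hδ := h₁.sqrt_add_sub_sqrt_sub hk hk₁ (by nlinarith)
  set A := √(4 * m ^ 2 + 3 / 4)
  set B := √(4 * m ^ 2 - 1 / 4)
  have hA : A ^ 2 = 4 * m ^ 2 + 3 / 4 := Real.sq_sqrt (by positivity)
  have hB : B ^ 2 = 4 * m ^ 2 - 1 / 4 := Real.sq_sqrt (by nlinarith)
  have hA0 : 2 * m ≤ A := Real.le_sqrt_of_sq_le (by nlinarith)
  have hB0 : 0 ≤ B := Real.sqrt_nonneg _
  have hAB : (A - B) * (A + B) = 1 := by linear_combination hA - hB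
  have hδ0 : 0 < A - B := by nlinarith
  refine ⟨A - B, hδ0, ?_, fun n => hδ.natCast_mul (hδ.two_mul hδ0) n⟩
  have hmε : 1 < m * ε := by rwa [inv_lt_iff_one_lt_mul₀ hε] at hm
  nlinarith

end PlaneToPlane

theorem stmt_0 (f : EuclideanSpace ℝ (Fin 2) → EuclideanSpace ℝ (Fin 2))
    (h : ∀ x y : EuclideanSpace ℝ (Fin 2), dist x y = 1 → dist (f x) (f y) = 1) :
    Isometry f := by
  have : Fact (finrank ℝ (EuclideanSpace ℝ (Fin 2)) = 2) := ⟨finrank_euclideanSpace_fin⟩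
  refine Isometry.of_dist_eq fun x y => eq_of_forall_dist_le fun ε hε => ?_
  obtain ⟨δ, hδ, hδε, hfδ⟩ := PreservesDist.exists_lt_forall_natCast_mul h (half_pos hε)
  rw [Real.dist_eq]
  linarith [PreservesDist.abs_dist_sub_dist_le hfδ hδ x y]
end

section
/- Let X, Y ∈ ℝⁿ and let S be a finite set with {X, Y} ⊆ S ⊆ ℝⁿ such that every injective map g : S → ℝⁿ satisfying (d(P,Q) = 1 ↔ d(g(P),g(Q)) = 1) for all P, Q ∈ S also satisfies d(g(X),g(Y)) = d(X,Y). Assume further that: (a) for every pair P ≠ Q in S there is a finite set T_{PQ} ⊇ {P,Q} such that every unit-distance-preserving map f on T_{PQ} satisfies |d(f(P),f(Q)) − d(P,Q)| ≤ d(P,Q)/2; and (b) for every pair P, Q ∈ S with d(P,Q) ≠ 1 there is a finite set U_{PQ} ⊇ {P,Q} such that every unit-distance-preserving map f on U_{PQ} satisfies |d(f(P),f(Q)) − d(P,Q)| ≤ |d(P,Q)−1|/2. Then the finite set S̃ = S ∪ ⋃ T_{PQ} ∪ ⋃ U_{PQ} has the property that every unit-distance-preserving map f : S̃ → ℝⁿ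 satisfies d(f(X),f(Y)) = d(X,Y). -/
theorem stmt_4 (n : ℕ) (hn : 1 < n)
    (X Y : EuclideanSpace ℝ (Fin n))
    (S : Set (EuclideanSpace ℝ (Fin n))) (hSfin : S.Finite)
    (hX : X ∈ S) (hY : Y ∈ S)
    (hS : ∀ g : EuclideanSpace ℝ (Fin n) → EuclideanSpace ℝ (Fin n),
      Set.InjOn g S →
      (∀ P ∈ S, ∀ Q ∈ S, (dist P Q = 1 ↔ dist (g P) (g Q) = 1)) →
      dist (g X) (g Y) = dist X Y)
    (T U : EuclideanSpace ℝ (Fin n) → EuclideanSpace ℝ (Fin n) → Set (EuclideanSpace ℝ (Fin n)))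
    (hT : ∀ P ∈ S, ∀ Q ∈ S, P ≠ Q →
      (T P Q).Finite ∧ P ∈ T P Q ∧ Q ∈ T P Q ∧
      ∀ f : EuclideanSpace ℝ (Fin n) → EuclideanSpace ℝ (Fin n),
        (∀ P' ∈ T P Q, ∀ Q' ∈ T P Q, dist P' Q' = 1 → dist (f P') (f Q') = 1) →
        |dist (f P) (f Q) - dist P Q| ≤ dist P Q / 2)
    (hU : ∀ P ∈ S, ∀ Q ∈ S, dist P Q ≠ 1 →
      (U P Q).Finite ∧ P ∈ U P Q ∧ Q ∈ U P Q ∧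
      ∀ f : EuclideanSpace ℝ (Fin n) → EuclideanSpace ℝ (Fin n),
        (∀ P' ∈ U P Q, ∀ Q' ∈ U P Q, dist P' Q' = 1 → dist (f P') (f Q') = 1) →
        |dist (f P) (f Q) - dist P Q| ≤ |dist P Q - 1| / 2) :
    (S ∪ (⋃ P ∈ S, ⋃ Q ∈ {Q ∈ S | P ≠ Q}, T P Q)
       ∪ (⋃ P ∈ S, ⋃ Q ∈ {Q ∈ S | dist P Q ≠ 1}, U P Q)).Finite ∧
    ∀ f : EuclideanSpace ℝ (Fin n) → EuclideanSpace ℝ (Fin n),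
      (∀ P' ∈ S ∪ (⋃ P ∈ S, ⋃ Q ∈ {Q ∈ S | P ≠ Q}, T P Q)
            ∪ (⋃ P ∈ S, ⋃ Q ∈ {Q ∈ S | dist P Q ≠ 1}, U P Q),
       ∀ Q' ∈ S ∪ (⋃ P ∈ S, ⋃ Q ∈ {Q ∈ S | P ≠ Q}, T P Q)
            ∪ (⋃ P ∈ S, ⋃ Q ∈ {Q ∈ S | dist P Q ≠ 1}, U P Q),
        dist P' Q' = 1 → dist (f P') (f Q') = 1) →
      dist (f X) (f Y) = dist X Y := by
  set Big := S ∪ (⋃ P ∈ S, ⋃ Q ∈ {Q ∈ S | P ≠ Q}, T P Q)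
       ∪ (⋃ P ∈ S, ⋃ Q ∈ {Q ∈ S | dist P Q ≠ 1}, U P Q) with hBig
  have hTsub : ∀ P ∈ S, ∀ Q ∈ S, P ≠ Q → T P Q ⊆ Big := by
    intro P hP Q hQ hne x hx
    exact Or.inl (Or.inr (Set.mem_biUnion hP (Set.mem_biUnion ⟨hQ, hne⟩ hx)))
  have hUsub : ∀ P ∈ S, ∀ Q ∈ S, dist P Q ≠ 1 → U P Q ⊆ Big := by
    intro P hP Q hQ hne x hx
    exact Or.inr (Set.mem_biUnion hP (Set.mem_biUnion ⟨hQ, hne⟩ hx))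
  constructor
  · refine ((hSfin.union ?_).union ?_)
    · refine hSfin.biUnion fun P hP => (hSfin.subset (Set.sep_subset _ _)).biUnion
        fun Q hQ => (hT P hP Q hQ.1 hQ.2).1
    · refine hSfin.biUnion fun P hP => (hSfin.subset (Set.sep_subset _ _)).biUnion
        fun Q hQ => (hU P hP Q hQ.1 hQ.2).1
  · intro f hf
    apply hS
    · intro P hP Q hQ hfPQ
      by_contra hne
      obtain ⟨_, _, _, hbd⟩ := hT P hP Q hQ hne
      have hbd' := hbd f (fun P' hP' Q' hQ' h1 =>
        hf P' (hTsub P hP Q hQ hne hP') Q' (hTsub P hP Q hQ hne hQ') h1)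
      have hd : 0 < dist P Q := dist_pos.mpr hne
      rw [hfPQ, dist_self] at hbd'
      rw [abs_of_nonpos (by linarith)] at hbd'
      linarith
    · intro P hP Q hQ
      constructor
      · intro h1
        exact hf P (Or.inl (Or.inl hP)) Q (Or.inl (Or.inl hQ)) h1
      · intro h1
        by_contra hne
        by_cases hPQ : P = Q
        · subst hPQ; rw [dist_self] at h1; norm_num at h1
        obtain ⟨_, _, _, hbd⟩ := hU P hP Q hQ hne
        have hbd' := hbd f (fun P' hP' Q' hQ' hd1 =>
          hf P' (hUsub P hP Q hQ hne hP') Q' (hUsub P hP Q hQ hne hQ') hd1)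
        rw [h1] at hbd'
        have : |dist P Q - 1| ≠ 0 := fun h => hne (by linarith [abs_eq_zero.mp h])
        have habs : 0 < |dist P Q - 1| := lt_of_le_of_ne (abs_nonneg _) (Ne.symm this)
        rw [abs_sub_comm] at hbd'
        linarith
end

section
/- Let K, L, M, N ∈ ℝⁿ and let C be a finite set with {K,L,M,N} ⊆ C ⊆ ℝⁿ such that every injective map g : C → ℝⁿ satisfying (d(P,Q) = 1 ↔ d(g(P),g(Q)) = 1) for all P, Q ∈ C also satisfies d(g(K),g(L)) = d(g(M),g(N)). Assume that for every pair P ≠ Q in C there is a finite set T_{PQ} ⊇ {P,Q} such that every unit-distance-preserving map f on T_{PQ} satisfies |d(f(P),f(Q)) − d(P,Q)| ≤ d(P,Q)/2, and for every pair P, Q ∈ C with d(P,Q) ≠ 1 there is a finite set U_{PQ} ⊇ {P,Q} such that every unit-distance-preserving map f on U_{PQ} satisfies |d(f(P),f(Q)) − d(P,Q)| ≤ |d(P,Q)−1|/2. Then the finite set C̃ = C ∪ ⋃ T_{PQ} ∪ ⋃ U_{PQ} has the property that every unit-distance-preserving map f : C̃ → ℝⁿ satisfies d(f(K),f(L)) =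 d(f(M),f(N)). -/
theorem stmt_5 (n : ℕ) (hn : 1 < n)
    (K L M N : EuclideanSpace ℝ (Fin n))
    (C : Set (EuclideanSpace ℝ (Fin n))) (hCfin : C.Finite)
    (hK : K ∈ C) (hL : L ∈ C) (hM : M ∈ C) (hN : N ∈ C)
    (hC : ∀ g : EuclideanSpace ℝ (Fin n) → EuclideanSpace ℝ (Fin n),
      Set.InjOn g C →
      (∀ P ∈ C, ∀ Q ∈ C, (dist P Q = 1 ↔ dist (g P) (g Q) = 1)) →
      dist (g K) (g L) = dist (g M) (g N))
    (T U : EuclideanSpace ℝ (Fin n) → EuclideanSpace ℝ (Fin n) → Set (EuclideanSpace ℝ (Fin n)))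
    (hT : ∀ P ∈ C, ∀ Q ∈ C, P ≠ Q →
      (T P Q).Finite ∧ P ∈ T P Q ∧ Q ∈ T P Q ∧
      ∀ f : EuclideanSpace ℝ (Fin n) → EuclideanSpace ℝ (Fin n),
        (∀ P' ∈ T P Q, ∀ Q' ∈ T P Q, dist P' Q' = 1 → dist (f P') (f Q') = 1) →
        |dist (f P) (f Q) - dist P Q| ≤ dist P Q / 2)
    (hU : ∀ P ∈ C, ∀ Q ∈ C, dist P Q ≠ 1 →
      (U P Q).Finite ∧ P ∈ U P Q ∧ Q ∈ U P Q ∧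
      ∀ f : EuclideanSpace ℝ (Fin n) → EuclideanSpace ℝ (Fin n),
        (∀ P' ∈ U P Q, ∀ Q' ∈ U P Q, dist P' Q' = 1 → dist (f P') (f Q') = 1) →
        |dist (f P) (f Q) - dist P Q| ≤ |dist P Q - 1| / 2) :
    (C ∪ (⋃ P ∈ C, ⋃ Q ∈ {Q ∈ C | P ≠ Q}, T P Q)
       ∪ (⋃ P ∈ C, ⋃ Q ∈ {Q ∈ C | dist P Q ≠ 1}, U P Q)).Finite ∧
    ∀ f : EuclideanSpace ℝ (Fin n) → EuclideanSpace ℝ (Fin n),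
      (∀ P' ∈ C ∪ (⋃ P ∈ C, ⋃ Q ∈ {Q ∈ C | P ≠ Q}, T P Q)
            ∪ (⋃ P ∈ C, ⋃ Q ∈ {Q ∈ C | dist P Q ≠ 1}, U P Q),
       ∀ Q' ∈ C ∪ (⋃ P ∈ C, ⋃ Q ∈ {Q ∈ C | P ≠ Q}, T P Q)
            ∪ (⋃ P ∈ C, ⋃ Q ∈ {Q ∈ C | dist P Q ≠ 1}, U P Q),
        dist P' Q' = 1 → dist (f P') (f Q') = 1) →
      dist (f K) (f L) = dist (f M) (f N) := by
  classical
  have hsubT : ∀ P ∈ C, ∀ Q ∈ C, P ≠ Q → T P Q ⊆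
      C ∪ (⋃ P ∈ C, ⋃ Q ∈ {Q ∈ C | P ≠ Q}, T P Q)
       ∪ (⋃ P ∈ C, ⋃ Q ∈ {Q ∈ C | dist P Q ≠ 1}, U P Q) := by
    intro P hP Q hQ hne x hx
    exact Or.inl (Or.inr (Set.mem_biUnion hP (Set.mem_biUnion ⟨hQ, hne⟩ hx)))
  have hsubU : ∀ P ∈ C, ∀ Q ∈ C, dist P Q ≠ 1 → U P Q ⊆
      C ∪ (⋃ P ∈ C, ⋃ Q ∈ {Q ∈ C | P ≠ Q}, T P Q)
       ∪ (⋃ P ∈ C, ⋃ Q ∈ {Q ∈ C | dist P Q ≠ 1}, U P Q) := by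
    intro P hP Q hQ hne x hx
    exact Or.inr (Set.mem_biUnion hP (Set.mem_biUnion ⟨hQ, hne⟩ hx))
  constructor
  · refine Set.Finite.union (Set.Finite.union hCfin ?_) ?_
    · exact hCfin.biUnion fun P hP =>
        (hCfin.subset (fun x hx => hx.1)).biUnion fun Q hQ => (hT P hP Q hQ.1 hQ.2).1
    · exact hCfin.biUnion fun P hP =>
        (hCfin.subset (fun x hx => hx.1)).biUnion fun Q hQ => (hU P hP Q hQ.1 hQ.2).1
  · intro f hf
    apply hC f
    · intro P hP Q hQ heq
      by_contra hne
      obtain ⟨-, -, -, hprop⟩ := hT P hP Q hQ hne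
      have hb := hprop f (fun P' hP' Q' hQ' h1 =>
        hf P' (hsubT P hP Q hQ hne hP') Q' (hsubT P hP Q hQ hne hQ') h1)
      rw [heq, dist_self] at hb
      have hd : 0 < dist P Q := dist_pos.mpr hne
      rw [abs_of_nonpos (by linarith)] at hb
      linarith
    · intro P hP Q hQ
      constructor
      · intro h1
        exact hf P (Or.inl (Or.inl hP)) Q (Or.inl (Or.inl hQ)) h1
      · intro h1
        by_contra hne
        obtain ⟨-, -, -, hprop⟩ := hU P hP Q hQ hne
        have hb := hprop f (fun P' hP' Q' hQ' h1 =>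
          hf P' (hsubU P hP Q hQ hne hP') Q' (hsubU P hP Q hQ hne hQ') h1)
        rw [h1] at hb
        have h0 : 0 < |dist P Q - 1| := abs_pos.mpr (sub_ne_zero.mpr hne)
        rw [abs_sub_comm] at hb
        linarith
end

section
/- In ℝⁿ (n ≥ 2), for any points A, B, C, D: d(A,B) = d(C,D) if and only if for every positive integer m there exist a positive rational r and points x, y ∈ ℝⁿ such that d(A,x) = r, d(C,y) = r, d(B,x) = 1/m, and d(D,y) = 1/m. -/
open scoped RealInnerProductSpace

set_option maxHeartbeats 1000000 in
lemma key {n : ℕ} (hn : 2 ≤ n) (A B : EuclideanSpace ℝ (Fin n)) {r s : ℝ}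
    (hr : 0 ≤ r) (hs : 0 ≤ s) (h1 : |r - s| ≤ dist A B) (h2 : dist A B ≤ r + s) :
    ∃ x : EuclideanSpace ℝ (Fin n), dist A x = r ∧ dist B x = s := by
  by_cases hAB : A = B
  · subst hAB
    have hrs : r = s := by
      rw [dist_self] at h1
      have : |r - s| = 0 := le_antisymm h1 (abs_nonneg _)
      linarith [abs_eq_zero.mp this]
    haveI : NeZero n := ⟨by omega⟩
    set v : EuclideanSpace ℝ (Fin n) := EuclideanSpace.single (0 : Fin n) (1 : ℝ) with hv0
    have hv : ‖v‖ = 1 := by simp [hv0, EuclideanSpace.norm_single]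
    refine ⟨A + r • v, ?_, ?_⟩ <;>
      rw [dist_eq_norm, show A - (A + r • v) = -(r • v) by abel, norm_neg, norm_smul, hv,
        Real.norm_eq_abs, abs_of_nonneg hr, mul_one] <;> try linarith
  · have hdpos : 0 < dist A B := dist_pos.mpr hAB
    set d : ℝ := dist A B with hd
    set w : EuclideanSpace ℝ (Fin n) := B - A with hw
    have hwne : w ≠ 0 := sub_ne_zero.mpr (Ne.symm hAB)
    have hwnorm : ‖w‖ = d := by rw [hw, hd, dist_eq_norm, norm_sub_rev]
    obtain ⟨v, hvmem, hvne⟩ : ∃ v ∈ (ℝ ∙ w)ᗮ, v ≠ 0 := by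
      apply Submodule.exists_mem_ne_zero_of_ne_bot
      intro hbot
      have h1' : Module.finrank ℝ (ℝ ∙ w) + Module.finrank ℝ (ℝ ∙ w)ᗮ
          = Module.finrank ℝ (EuclideanSpace ℝ (Fin n)) :=
        Submodule.finrank_add_finrank_orthogonal _
      rw [hbot, finrank_span_singleton hwne, finrank_euclideanSpace_fin] at h1'
      simp at h1'
      omega
    set u : EuclideanSpace ℝ (Fin n) := (d⁻¹) • w with hu
    set e : EuclideanSpace ℝ (Fin n) := ‖v‖⁻¹ • v with he
    have hunorm : ‖u‖ = 1 := by
      rw [hu, norm_smul, hwnorm, norm_inv, Real.norm_eq_abs, abs_of_pos hdpos,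
        inv_mul_cancel₀ hdpos.ne']
    have henorm : ‖e‖ = 1 := norm_smul_inv_norm hvne
    have hwv : ⟪w, v⟫ = 0 := hvmem w (Submodule.mem_span_singleton_self w)
    have hortho : ⟪u, e⟫ = 0 := by
      rw [hu, he, real_inner_smul_left, real_inner_smul_right, hwv]; ring
    have hortho2 : ⟪e, u⟫ = 0 := by rw [real_inner_comm]; exact hortho
    set t : ℝ := (d^2 + r^2 - s^2) / (2 * d) with ht
    have habs := abs_le.mp h1
    have hle : t^2 ≤ r^2 := by
      rw [ht, div_pow, div_le_iff₀ (by positivity)]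
      have hf1 : 0 ≤ (d + r)^2 - s^2 := by nlinarith [habs.1, habs.2]
      have hf2 : 0 ≤ s^2 - (d - r)^2 := by nlinarith [habs.1, habs.2]
      nlinarith [mul_nonneg hf1 hf2]
    set h : ℝ := Real.sqrt (r^2 - t^2) with hh
    have hh2 : h^2 = r^2 - t^2 := Real.sq_sqrt (by linarith)
    have norm_comb : ∀ a b : ℝ, ‖a • u + b • e‖^2 = a^2 + b^2 := by
      intro a b
      rw [← real_inner_self_eq_norm_sq]
      simp only [inner_add_left, inner_add_right, real_inner_smul_left, real_inner_smul_right]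
      rw [hortho, hortho2, real_inner_self_eq_norm_sq, real_inner_self_eq_norm_sq,
        hunorm, henorm]
      ring
    have htd : t * (2 * d) = d^2 + r^2 - s^2 := by
      rw [ht, div_mul_cancel₀]; positivity
    refine ⟨A + (t • u + h • e), ?_, ?_⟩
    · rw [dist_eq_norm, show A - (A + (t • u + h • e)) = -(t • u + h • e) by abel, norm_neg]
      have hsq : ‖t • u + h • e‖^2 = r^2 := by rw [norm_comb]; linarith
      calc ‖t • u + h • e‖ = Real.sqrt (‖t • u + h • e‖^2) :=
            (Real.sqrt_sq (norm_nonneg _)).symm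
        _ = r := by rw [hsq, Real.sqrt_sq hr]
    · have hBA : B = A + d • u := by
        rw [hu, smul_smul, mul_inv_cancel₀ hdpos.ne', one_smul, hw]; abel
      have hrw : B - (A + (t • u + h • e)) = (d - t) • u + (-h) • e := by
        rw [hBA, sub_smul, neg_smul]; abel
      rw [dist_eq_norm, hrw]
      have hsq : ‖(d - t) • u + (-h) • e‖^2 = s^2 := by
        rw [norm_comb]; nlinarith [htd, hh2]
      calc ‖(d - t) • u + (-h) • e‖ = Real.sqrt (‖(d - t) • u + (-h) • e‖^2) :=
            (Real.sqrt_sq (norm_nonneg _)).symm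
        _ = s := by rw [hsq, Real.sqrt_sq hs]

theorem stmt_14 (n : ℕ) (hn : 2 ≤ n) (A B C D : EuclideanSpace ℝ (Fin n)) :
    dist A B = dist C D ↔
    ∀ m : ℕ, 0 < m → ∃ r : ℚ, 0 < r ∧ ∃ x y : EuclideanSpace ℝ (Fin n),
      dist A x = (r : ℝ) ∧ dist C y = (r : ℝ) ∧
      dist B x = 1 / (m : ℝ) ∧ dist D y = 1 / (m : ℝ) := by
  constructor
  · intro hACBD m hm
    have hm' : (0 : ℝ) < 1 / m := by positivity
    set d : ℝ := dist A B with hd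
    have hdnn : 0 ≤ d := dist_nonneg
    by_cases hd0 : d = 0
    · refine ⟨1 / m, by positivity, ?_⟩
      have hq : ((1 / (m : ℚ) : ℚ) : ℝ) = 1 / (m : ℝ) := by push_cast; ring
      obtain ⟨x, hx1, hx2⟩ := key hn A B (le_of_lt hm') (le_of_lt hm')
        (by rw [← hd, hd0]; simp) (by rw [← hd, hd0]; positivity)
      obtain ⟨y, hy1, hy2⟩ := key hn C D (le_of_lt hm') (le_of_lt hm')
        (by rw [← hACBD, hd0]; simp) (by rw [← hACBD, hd0]; positivity)
      exact ⟨x, y, by rw [hq]; exact hx1, by rw [hq]; exact hy1, hx2, hy2⟩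
    · have hdpos : 0 < d := lt_of_le_of_ne hdnn (Ne.symm hd0)
      obtain ⟨r, hr1, hr2⟩ := exists_rat_btwn
        (show max d (1 / m - d) < d + 1 / m by
          rcases max_cases d (1 / m - d) with ⟨h, _⟩ | ⟨h, _⟩ <;> rw [h] <;> linarith)
      have hrpos : (0 : ℝ) < r := lt_of_le_of_lt (hdnn.trans (le_max_left _ _)) hr1
      have habs : |(r : ℝ) - 1 / m| ≤ d := by
        rw [abs_le]
        have h1 := lt_of_le_of_lt (le_max_right d (1 / m - d)) hr1
        constructor <;> linarith
      have hle : d ≤ (r : ℝ) + 1 / m := by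
        have := lt_of_le_of_lt (le_max_left d (1 / m - d)) hr1
        linarith
      refine ⟨r, by exact_mod_cast hrpos, ?_⟩
      obtain ⟨x, hx1, hx2⟩ := key hn A B hrpos.le hm'.le (by rw [← hd]; exact habs)
        (by rw [← hd]; exact hle)
      obtain ⟨y, hy1, hy2⟩ := key hn C D hrpos.le hm'.le (by rw [← hACBD]; exact habs)
        (by rw [← hACBD]; exact hle)
      exact ⟨x, y, hx1, hy1, hx2, hy2⟩
  · intro H
    by_contra hne
    obtain ⟨m, hm⟩ := exists_nat_one_div_lt (show 0 < |dist A B - dist C D| / 2 by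
      have : dist A B - dist C D ≠ 0 := sub_ne_zero.mpr hne
      positivity)
    obtain ⟨r, hr, x, y, hAx, hCy, hBx, hDy⟩ := H (m + 1) (Nat.succ_pos m)
    have h1 : |dist A B - (r : ℝ)| ≤ 1 / (m + 1 : ℝ) := by
      calc |dist A B - (r : ℝ)| = |dist A B - dist A x| := by rw [hAx]
        _ ≤ dist B x := by rw [dist_comm A B, dist_comm A x]; exact abs_dist_sub_le _ _ _
        _ = 1 / (m + 1 : ℝ) := by rw [hBx]; push_cast; ring
    have h2 : |dist C D - (r : ℝ)| ≤ 1 / (m + 1 : ℝ) := by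
      calc |dist C D - (r : ℝ)| = |dist C D - dist C y| := by rw [hCy]
        _ ≤ dist D y := by rw [dist_comm C D, dist_comm C y]; exact abs_dist_sub_le _ _ _
        _ = 1 / (m + 1 : ℝ) := by rw [hDy]; push_cast; ring
    have h6 : |dist A B - dist C D| ≤ 2 / (m + 1 : ℝ) := by
      calc |dist A B - dist C D| ≤ |dist A B - (r : ℝ)| + |(r : ℝ) - dist C D| :=
            abs_sub_le _ _ _
        _ ≤ 1 / (m + 1 : ℝ) + 1 / (m + 1 : ℝ) := by
            rw [abs_sub_comm (r : ℝ)]; exact add_le_add h1 h2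
        _ = 2 / (m + 1 : ℝ) := by ring
    have hhalf : (2 : ℝ) / (m + 1) = 2 * (1 / (m + 1 : ℝ)) := by ring
    linarith
end
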